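/- arXiv:math/0511143 — 4 statements merged into one kernel-verified Lean document; each statement's English description precedes it below -/
import Mathlib

section
/- A normalized tight frame (e_i)_{i∈I} for a Hilbert space H is an orthonormal basis if and only if ‖e_i‖ = 1 for all i ∈ I. -/
open scoped InnerProductSpace

/-- A normalized tight frame `(e i)_{i ∈ I}` for a complex Hilbert space `H`
is an orthonormal basis (an orthonormal family whose span is dense) if and only if
`‖e i‖ = 1` for all `i`. -/
theorem stmt_1 {H : Type*} [NormedAddCommGroup H] [InnerProductSpace ℂ H] [CompleteSpace H]
    {I : Type*} (e : I → H)
    (hframe : ∀ f : H, ∑' i : I, ‖⟪f, e i⟫_ℂ‖ ^ 2 = ‖f‖ ^ 2) :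
    (Orthonormal ℂ e ∧ (Submodule.span ℂ (Set.range e)).topologicalClosure = ⊤)
      ↔ ∀ i : I, ‖e i‖ = 1 := by
  constructor
  · rintro ⟨h, -⟩ i
    exact h.1 i
  · intro hnorm
    have key : ∀ i j : I, i ≠ j → ⟪e i, e j⟫_ℂ = 0 := by
      intro i j hij
      classical
      have hsum := hframe (e i)
      rw [hnorm i] at hsum
      have hii : ‖⟪e i, e i⟫_ℂ‖ ^ 2 = 1 := by
        rw [inner_self_eq_norm_sq_to_K]
        simp [hnorm i]
      have hS : Summable (fun k => ‖⟪e i, e k⟫_ℂ‖ ^ 2) := by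
        by_contra hns
        rw [tsum_eq_zero_of_not_summable hns] at hsum
        norm_num at hsum
      have hle : ∑ k ∈ ({i, j} : Finset I), ‖⟪e i, e k⟫_ℂ‖ ^ 2 ≤
          ∑' k, ‖⟪e i, e k⟫_ℂ‖ ^ 2 := by
        refine Summable.sum_le_tsum _ (fun k _ => by positivity) hS
      rw [Finset.sum_pair hij, hsum, hii] at hle
      have : ‖⟪e i, e j⟫_ℂ‖ ^ 2 ≤ 0 := by linarith
      have h0 : ‖⟪e i, e j⟫_ℂ‖ = 0 := by nlinarith [norm_nonneg (⟪e i, e j⟫_ℂ)]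
      exact norm_eq_zero.mp h0
    refine ⟨⟨hnorm, key⟩, ?_⟩
    rw [Submodule.topologicalClosure_eq_top_iff]
    rw [Submodule.eq_bot_iff]
    intro f hf
    have hfi : ∀ i, ⟪f, e i⟫_ℂ = 0 := by
      intro i
      have := hf (e i) (Submodule.subset_span (Set.mem_range_self i))
      rw [← inner_conj_symm, this, map_zero]
    have : ‖f‖ ^ 2 = 0 := by
      rw [← hframe f]
      simp [hfi]
    simpa using pow_eq_zero_iff (n := 2) (by norm_num) |>.mp this
end

section
/- Let H, K be Hilbert spaces and (e_i)_{i∈I} a normalized tight frame for H, (f_i)_{i∈I} a family in K such that (e_i ⊕ f_i)_{i∈I} is a normalized tight frame for H ⊕ K. Then for every g ∈ H, Σ_{i∈I} ⟨g, e_i⟩ f_i = 0 (the series converging in K). -/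
/-!
Taking `g = 0` in the frame identity on `H ⊕ K` shows that `f` is itself a Parseval frame, so
expanding `‖⟪g, e i⟫ + ⟪k, f i⟫‖²` and subtracting the two Parseval identities leaves
`Re ∑ ⟪e i, g⟫ ⟪k, f i⟫ = 0`; replacing `k` by `I • k` kills the imaginary part too. Being a
Bessel family, `f` makes the series `y = ∑ ⟪e i, g⟫ • f i` converge, and then
`⟪y, y⟫ = ∑ ⟪e i, g⟫ ⟪y, f i⟫ = 0`.
-/

open scoped InnerProductSpace ComplexConjugate

section Frames

variable {𝕜 E ι : Type*} [RCLike 𝕜] [NormedAddCommGroup E] [InnerProductSpace 𝕜 E]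

variable (𝕜) in
def IsParsevalFrame (v : ι → E) : Prop :=
  ∀ x, HasSum (fun i => ‖⟪x, v i⟫_𝕜‖ ^ 2) (‖x‖ ^ 2)

theorem IsParsevalFrame.of_tsum_eq {v : ι → E} (h : ∀ x, ∑' i, ‖⟪x, v i⟫_𝕜‖ ^ 2 = ‖x‖ ^ 2) :
    IsParsevalFrame 𝕜 v := by
  intro x
  rcases eq_or_ne x 0 with rfl | hx
  · simp [hasSum_zero]
  refine h x ▸ Summable.hasSum ?_
  by_contra hs
  have := (tsum_eq_zero_of_not_summable hs).symm.trans (h x)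
  exact hx (by simpa using this.symm)

theorem IsParsevalFrame.sum_le {v : ι → E} (hv : IsParsevalFrame 𝕜 v) (x : E) (s : Finset ι) :
    ∑ i ∈ s, ‖⟪x, v i⟫_𝕜‖ ^ 2 ≤ ‖x‖ ^ 2 :=
  sum_le_hasSum s (fun _ _ => by positivity) (hv x)

theorem norm_sum_smul_sq_le_of_bessel {v : ι → E}
    (hv : ∀ x (s : Finset ι), ∑ i ∈ s, ‖⟪x, v i⟫_𝕜‖ ^ 2 ≤ ‖x‖ ^ 2) (c : ι → 𝕜) (s : Finset ι) :
    ‖∑ i ∈ s, c i • v i‖ ^ 2 ≤ ∑ i ∈ s, ‖c i‖ ^ 2 := by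
  set x := ∑ i ∈ s, c i • v i
  have hexp : ⟪x, x⟫_𝕜 = ∑ i ∈ s, c i * ⟪x, v i⟫_𝕜 := by
    change ⟪x, ∑ i ∈ s, c i • v i⟫_𝕜 = _
    simp only [inner_sum, inner_smul_right]
  have hxx : ‖x‖ ^ 2 ≤ ∑ i ∈ s, ‖c i‖ * ‖⟪x, v i⟫_𝕜‖ := calc
    ‖x‖ ^ 2 = ‖⟪x, x⟫_𝕜‖ := by simp [inner_self_eq_norm_sq_to_K]
    _ = ‖∑ i ∈ s, c i * ⟪x, v i⟫_𝕜‖ := by rw [hexp]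
    _ ≤ ∑ i ∈ s, ‖c i‖ * ‖⟪x, v i⟫_𝕜‖ := (norm_sum_le s _).trans_eq (by simp only [norm_mul])
  have hsq : (‖x‖ ^ 2) ^ 2 ≤ (∑ i ∈ s, ‖c i‖ ^ 2) * ‖x‖ ^ 2 := calc
    (‖x‖ ^ 2) ^ 2 ≤ (∑ i ∈ s, ‖c i‖ * ‖⟪x, v i⟫_𝕜‖) ^ 2 := by gcongr
    _ ≤ (∑ i ∈ s, ‖c i‖ ^ 2) * ∑ i ∈ s, ‖⟪x, v i⟫_𝕜‖ ^ 2 :=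
      Finset.sum_mul_sq_le_sq_mul_sq s (fun i => ‖c i‖) (fun i => ‖⟪x, v i⟫_𝕜‖)
    _ ≤ (∑ i ∈ s, ‖c i‖ ^ 2) * ‖x‖ ^ 2 := by gcongr; exact hv x s
  rcases (sq_nonneg ‖x‖).eq_or_lt with h0 | hpos
  · rw [← h0]; positivity
  · exact le_of_mul_le_mul_right (by nlinarith) hpos

theorem summable_smul_of_bessel [CompleteSpace E] {v : ι → E}
    (hv : ∀ x (s : Finset ι), ∑ i ∈ s, ‖⟪x, v i⟫_𝕜‖ ^ 2 ≤ ‖x‖ ^ 2) {c : ι → 𝕜}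
    (hc : Summable fun i => ‖c i‖ ^ 2) : Summable fun i => c i • v i := by
  rw [summable_iff_vanishing_norm]
  intro ε hε
  obtain ⟨s, hs⟩ := summable_iff_vanishing_norm.mp hc (ε ^ 2) (by positivity)
  refine ⟨s, fun t ht => lt_of_pow_lt_pow_left₀ 2 hε.le ?_⟩
  calc ‖∑ i ∈ t, c i • v i‖ ^ 2 ≤ ∑ i ∈ t, ‖c i‖ ^ 2 := norm_sum_smul_sq_le_of_bessel hv c t
    _ < ε ^ 2 := by
      simpa [Real.norm_of_nonneg (Finset.sum_nonneg fun _ _ => sq_nonneg _)] using hs t ht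

end Frames

theorem summable_sq_norm_add {ι E : Type*} [SeminormedAddCommGroup E] {a b : ι → E}
    (ha : Summable fun i => ‖a i‖ ^ 2) (hb : Summable fun i => ‖b i‖ ^ 2) :
    Summable fun i => ‖a i + b i‖ ^ 2 := by
  refine .of_nonneg_of_le (fun _ => by positivity) (fun i => ?_) ((ha.add hb).mul_left 2)
  calc ‖a i + b i‖ ^ 2 ≤ (‖a i‖ + ‖b i‖) ^ 2 := by gcongr; exact norm_add_le _ _
    _ ≤ 2 * (‖a i‖ ^ 2 + ‖b i‖ ^ 2) := add_sq_le

theorem Complex.hasSum_re_mul_conj {ι : Type*} {a b : ι → ℂ} {A B : ℝ}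
    (ha : HasSum (fun i => ‖a i‖ ^ 2) A) (hb : HasSum (fun i => ‖b i‖ ^ 2) B)
    (hab : HasSum (fun i => ‖a i + b i‖ ^ 2) (A + B)) :
    HasSum (fun i => (a i * conj (b i)).re) 0 := by
  have key : ∀ i, (a i * conj (b i)).re = (‖a i + b i‖ ^ 2 - ‖a i‖ ^ 2 - ‖b i‖ ^ 2) / 2 := by
    intro i
    simp only [Complex.sq_norm, Complex.normSq_add]
    ring
  simpa [key] using ((hab.sub ha).sub hb).div_const 2

theorem hasSum_inner_mul_inner_eq_zero {ι H K : Type*} [NormedAddCommGroup H]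
    [InnerProductSpace ℂ H] [NormedAddCommGroup K] [InnerProductSpace ℂ K] {e : ι → H}
    {f : ι → K} (he : IsParsevalFrame ℂ e) (hf : IsParsevalFrame ℂ f)
    (hef : ∀ g k, HasSum (fun i => ‖⟪g, e i⟫_ℂ + ⟪k, f i⟫_ℂ‖ ^ 2) (‖g‖ ^ 2 + ‖k‖ ^ 2))
    (g : H) (k : K) : HasSum (fun i => ⟪e i, g⟫_ℂ * ⟪k, f i⟫_ℂ) 0 := by
  have hre (k : K) : HasSum (fun i => (⟪g, e i⟫_ℂ * conj ⟪k, f i⟫_ℂ).re) 0 :=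
    Complex.hasSum_re_mul_conj (he g) (hf k) (hef g k)
  rw [Complex.hasSum_iff]
  constructor
  · refine (hre k).congr_fun fun i => ?_
    rw [← inner_conj_symm (e i) g]
    simp only [Complex.mul_re, Complex.conj_re, Complex.conj_im]
    ring
  · refine (hre (Complex.I • k)).congr_fun fun i => ?_
    rw [← inner_conj_symm (e i) g, inner_smul_left]
    simp only [Complex.mul_re, Complex.mul_im, Complex.conj_re, Complex.conj_im, Complex.I_re,
      Complex.I_im]
    ring

theorem stmt_3_general {H K : Type*} [NormedAddCommGroup H] [InnerProductSpace ℂ H]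
    [NormedAddCommGroup K] [InnerProductSpace ℂ K] [CompleteSpace K]
    {I : Type*} (e : I → H) (f : I → K)
    (hframe : ∀ g : H, ∑' i : I, ‖⟪g, e i⟫_ℂ‖ ^ 2 = ‖g‖ ^ 2)
    (hsuper : ∀ (g : H) (k : K),
      ∑' i : I, ‖⟪g, e i⟫_ℂ + ⟪k, f i⟫_ℂ‖ ^ 2 = ‖g‖ ^ 2 + ‖k‖ ^ 2) :
    ∀ g : H, HasSum (fun i : I => ⟪e i, g⟫_ℂ • f i) 0 := by
  intro g
  have he : IsParsevalFrame ℂ e := .of_tsum_eq hframe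
  have hf : IsParsevalFrame ℂ f := .of_tsum_eq fun k => by simpa using hsuper 0 k
  have hef (g : H) (k : K) :
      HasSum (fun i => ‖⟪g, e i⟫_ℂ + ⟪k, f i⟫_ℂ‖ ^ 2) (‖g‖ ^ 2 + ‖k‖ ^ 2) :=
    hsuper g k ▸ (summable_sq_norm_add (he g).summable (hf k).summable).hasSum
  obtain ⟨y, hy⟩ : Summable fun i => ⟪e i, g⟫_ℂ • f i :=
    summable_smul_of_bessel hf.sum_le (by simpa only [norm_inner_symm] using (he g).summable)
  have hyy : ⟪y, y⟫_ℂ = 0 := by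
    refine (hy.mapL (innerSL ℂ y)).unique ?_
    simpa [inner_smul_right] using hasSum_inner_mul_inner_eq_zero he hf hef g y
  rwa [inner_self_eq_zero.mp hyy] at hy

/-- Let `(e i)` be a normalized tight frame for `H` and `(f i)` a family in
`K` such that `(e i ⊕ f i)` is a normalized tight frame for `H ⊕ K` (where
`⟨h₁⊕k₁, h₂⊕k₂⟩ = ⟨h₁,h₂⟩ + ⟨k₁,k₂⟩`, so that
`|⟨(g,k),(e i,f i)⟩|² = ‖⟨g,e i⟩ + ⟨k,f i⟩‖²`).  Then for every `g ∈ H` the series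
`∑ i ⟨g, e i⟩ f i` converges to `0` in `K`.  (Paper convention: `⟨·,·⟩` is linear in the
first variable, so `⟨g, e i⟩ = ⟪e i, g⟫_ℂ` in Mathlib's convention.) -/
theorem stmt_3 {H K : Type*} [NormedAddCommGroup H] [InnerProductSpace ℂ H] [CompleteSpace H]
    [NormedAddCommGroup K] [InnerProductSpace ℂ K] [CompleteSpace K]
    {I : Type*} (e : I → H) (f : I → K)
    (hframe : ∀ g : H, ∑' i : I, ‖⟪g, e i⟫_ℂ‖ ^ 2 = ‖g‖ ^ 2)
    (hsuper : ∀ (g : H) (k : K),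
      ∑' i : I, ‖⟪g, e i⟫_ℂ + ⟪k, f i⟫_ℂ‖ ^ 2 = ‖g‖ ^ 2 + ‖k‖ ^ 2) :
    ∀ g : H, HasSum (fun i : I => ⟪e i, g⟫_ℂ • f i) 0 :=
  stmt_3_general e f hframe hsuper
end

section
/- Let (e_i)_{i∈I} and (f_i)_{i∈I} be normalized tight frames for Hilbert spaces H and K respectively. Then (e_i ⊕ f_i)_{i∈I} is a normalized tight frame for H ⊕ K if and only if Σ_{i∈I} ⟨g, e_i⟩⟨f_i, k⟩ = 0 for all g ∈ H, k ∈ K. -/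
/-!
Since `‖a + b‖² = ‖a‖² + ‖b‖² + 2 Re (conj a * b)`, summing over `i` with `a = ⟪g, e i⟫`,
`b = ⟪k, f i⟫` shows that the frame sum of `(g, k)` exceeds `‖g‖² + ‖k‖²` by
`2 Re ∑ ⟪e i, g⟫⟪k, f i⟫`. This series is ℂ-linear in `g`, so its real part vanishes for all `g`
exactly when the series itself does: replacing `g` by `I • g` turns the real part into minus the
imaginary part.
-/

open scoped InnerProductSpace ComplexConjugate

section RCLike

variable {𝕜 ι : Type*} [RCLike 𝕜]

theorem RCLike.norm_add_sq_eq (a b : 𝕜) :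
    ‖a + b‖ ^ 2 = ‖a‖ ^ 2 + ‖b‖ ^ 2 + 2 * RCLike.re (conj a * b) := by
  rw [norm_add_sq (𝕜 := 𝕜), RCLike.inner_apply']
  ring

theorem summable_mul_of_summable_sq_norm {a b : ι → 𝕜} (ha : Summable fun i => ‖a i‖ ^ 2)
    (hb : Summable fun i => ‖b i‖ ^ 2) : Summable fun i => a i * b i := by
  refine Summable.of_norm_bounded ((ha.add hb).div_const 2) fun i => ?_
  rw [norm_mul, le_div_iff₀ two_pos]
  linarith [two_mul_le_add_sq ‖a i‖ ‖b i‖]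

theorem HasSum.sq_norm_add {a b : ι → 𝕜} {A B : ℝ} {c : 𝕜}
    (ha : HasSum (fun i => ‖a i‖ ^ 2) A) (hb : HasSum (fun i => ‖b i‖ ^ 2) B)
    (hc : HasSum (fun i => conj (a i) * b i) c) :
    HasSum (fun i => ‖a i + b i‖ ^ 2) (A + B + 2 * RCLike.re c) := by
  simp only [RCLike.norm_add_sq_eq]
  exact (ha.add hb).add ((RCLike.hasSum_re _ hc).mul_left 2)

end RCLike

theorem summable_sq_norm_inner_of_tsum_eq {𝕜 E ι : Type*} [RCLike 𝕜] [NormedAddCommGroup E]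
    [InnerProductSpace 𝕜 E] {e : ι → E} {g : E} (hg : ∑' i, ‖⟪g, e i⟫_𝕜‖ ^ 2 = ‖g‖ ^ 2) :
    Summable fun i => ‖⟪g, e i⟫_𝕜‖ ^ 2 := by
  by_contra h
  rw [tsum_eq_zero_of_not_summable h, eq_comm, sq_eq_zero_iff, norm_eq_zero] at hg
  subst hg
  simp at h

theorem Complex.eq_zero_of_forall_re_eq_zero {E : Type*} [SMul ℂ E] {φ : E → ℂ}
    (hφ : ∀ g, φ (Complex.I • g) = Complex.I * φ g) (h : ∀ g, (φ g).re = 0) (g : E) :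
    φ g = 0 := by
  refine Complex.ext (h g) ?_
  simpa [hφ, Complex.I_mul_re] using h (Complex.I • g)

/-- The paper's inner products are linear in the first variable, so its `⟨g, e i⟩⟨f i, k⟩` is
`⟪e i, g⟫_ℂ * ⟪k, f i⟫_ℂ` here. -/
theorem stmt_4_general {H K : Type*} [NormedAddCommGroup H] [InnerProductSpace ℂ H]
    [NormedAddCommGroup K] [InnerProductSpace ℂ K]
    {I : Type*} (e : I → H) (f : I → K)
    (hframeH : ∀ g : H, ∑' i : I, ‖⟪g, e i⟫_ℂ‖ ^ 2 = ‖g‖ ^ 2)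
    (hframeK : ∀ k : K, ∑' i : I, ‖⟪k, f i⟫_ℂ‖ ^ 2 = ‖k‖ ^ 2) :
    (∀ (g : H) (k : K),
        ∑' i : I, ‖⟪g, e i⟫_ℂ + ⟪k, f i⟫_ℂ‖ ^ 2 = ‖g‖ ^ 2 + ‖k‖ ^ 2)
      ↔ ∀ (g : H) (k : K), HasSum (fun i : I => ⟪e i, g⟫_ℂ * ⟪k, f i⟫_ℂ) 0 := by
  have sumH g := summable_sq_norm_inner_of_tsum_eq (hframeH g)
  have sumK k := summable_sq_norm_inner_of_tsum_eq (hframeK k)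
  have sumC g k : Summable fun i => ⟪e i, g⟫_ℂ * ⟪k, f i⟫_ℂ :=
    summable_mul_of_summable_sq_norm (by simpa only [norm_inner_symm] using sumH g) (sumK k)
  have expand g k :=
    HasSum.sq_norm_add (hframeH g ▸ (sumH g).hasSum) (hframeK k ▸ (sumK k).hasSum) (by
      simpa only [inner_conj_symm] using (sumC g k).hasSum)
  calc (∀ g k, ∑' i, ‖⟪g, e i⟫_ℂ + ⟪k, f i⟫_ℂ‖ ^ 2 = ‖g‖ ^ 2 + ‖k‖ ^ 2)
      ↔ ∀ g k, (∑' i, ⟪e i, g⟫_ℂ * ⟪k, f i⟫_ℂ).re = 0 := by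
        refine forall₂_congr fun g k => ?_
        rw [(expand g k).tsum_eq, RCLike.re_to_complex]
        constructor <;> intro h <;> linarith
    _ ↔ ∀ g k, ∑' i, ⟪e i, g⟫_ℂ * ⟪k, f i⟫_ℂ = 0 := by
        refine ⟨fun h g k => Complex.eq_zero_of_forall_re_eq_zero (fun g => ?_) (h · k) g,
          fun h g k => by simp [h g k]⟩
        simp only [inner_smul_right, mul_assoc, tsum_mul_left]
    _ ↔ ∀ g k, HasSum (fun i => ⟪e i, g⟫_ℂ * ⟪k, f i⟫_ℂ) 0 :=
        forall₂_congr fun g k => (sumC g k).hasSum_iff.symm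

/-- Let `(e i)` and `(f i)` be normalized tight frames for Hilbert spaces
`H` and `K`.  Then `(e i ⊕ f i)` is a normalized tight frame for `H ⊕ K` if and only if
`∑ i ⟨g, e i⟩⟨f i, k⟩ = 0` for all `g ∈ H`, `k ∈ K`.  (Paper convention: inner products are
linear in the first variable, so `⟨g, e i⟩⟨f i, k⟩ = ⟪e i, g⟫_ℂ * ⟪k, f i⟫_ℂ` in Mathlib's
convention.) -/
theorem stmt_4 {H K : Type*} [NormedAddCommGroup H] [InnerProductSpace ℂ H] [CompleteSpace H]
    [NormedAddCommGroup K] [InnerProductSpace ℂ K] [CompleteSpace K]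
    {I : Type*} (e : I → H) (f : I → K)
    (hframeH : ∀ g : H, ∑' i : I, ‖⟪g, e i⟫_ℂ‖ ^ 2 = ‖g‖ ^ 2)
    (hframeK : ∀ k : K, ∑' i : I, ‖⟪k, f i⟫_ℂ‖ ^ 2 = ‖k‖ ^ 2) :
    (∀ (g : H) (k : K),
        ∑' i : I, ‖⟪g, e i⟫_ℂ + ⟪k, f i⟫_ℂ‖ ^ 2 = ‖g‖ ^ 2 + ‖k‖ ^ 2)
      ↔ ∀ (g : H) (k : K), HasSum (fun i : I => ⟪e i, g⟫_ℂ * ⟪k, f i⟫_ℂ) 0 :=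
  stmt_4_general e f hframeH hframeK
end

section
/- Define on L²(ℝ)ⁿ the operators T(f₁,...,fₙ) = (z₁ f₁(·−1), ..., zₙ fₙ(·−1)) and U(f₁,...,fₙ) = (U₀ f_{σ(1)}, ..., U₀ f_{σ(n)}) where U₀f(x) = N^{-1/2} f(x/N), σ is a permutation of {1,...,n}, and z₁,...,zₙ ∈ 𝕋 satisfy zₖ^N = z_{σ(k)}. Then U and T are unitary and satisfy U T U^{-1} = T^N. -/
/-!
Both operators act coordinatewise up to a permutation of the coordinates: `T` multiplies a
translate by a unimodular constant and `U` is the `L²`-normalised dilation `U₀`, so both preserve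
`∑ᵢ ∫ |fᵢ|²` by translation invariance of Lebesgue measure and its scaling `x ↦ x / N`.
The relation `U T = Tᴺ U` is the identity `(x - N) / N = x / N - 1` together with
`z_k ^ N = z_{σ k}`.
-/

open MeasureTheory

/-- The translation `T(f₁,…,fₙ) = (z₁ f₁(·−1), …, zₙ fₙ(·−1))` on `L²(ℝ)ⁿ`. -/
noncomputable def transOp {n : ℕ} (z : Fin n → ℂ) (f : Fin n → ℝ → ℂ) :
    Fin n → ℝ → ℂ :=
  fun i x => z i * f i (x - 1)

/-- The dilation `U(f₁,…,fₙ) = (U₀ f_{σ(1)}, …, U₀ f_{σ(n)})`, `U₀g(x) = N^{-1/2} g(x/N)`. -/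
noncomputable def dilOp {n : ℕ} (N : ℕ) (σ : Equiv.Perm (Fin n)) (f : Fin n → ℝ → ℂ) :
    Fin n → ℝ → ℂ :=
  fun i x => ((Real.sqrt N : ℂ))⁻¹ * f (σ i) (x / N)

lemma lintegral_comp_div_real (f : ℝ → ENNReal) {c : ℝ} (hc : c ≠ 0) :
    ∫⁻ x, f (x / c) = ENNReal.ofReal |c| * ∫⁻ x, f x := by
  have hc' : c⁻¹ ≠ 0 := inv_ne_zero hc
  simp_rw [div_eq_mul_inv]
  calc ∫⁻ x, f (x * c⁻¹) = ∫⁻ y, f y ∂(Measure.map (· * c⁻¹) volume) :=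
        (lintegral_map_equiv f (Homeomorph.mulRight₀ c⁻¹ hc').toMeasurableEquiv).symm
    _ = ENNReal.ofReal |c| * ∫⁻ x, f x := by
        rw [Real.map_volume_mul_right hc', lintegral_smul_measure, inv_inv, smul_eq_mul]

lemma lintegral_nnnorm_sq_mul_comp_sub (g : ℝ → ℂ) {a : ℂ} (ha : ‖a‖ = 1) (t : ℝ) :
    ∫⁻ x, (‖a * g (x - t)‖₊ : ENNReal) ^ 2 = ∫⁻ x, (‖g x‖₊ : ENNReal) ^ 2 := by
  have ha' : ‖a‖₊ = 1 := NNReal.eq ha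
  simp only [nnnorm_mul, ha', one_mul]
  exact lintegral_sub_right_eq_self (fun x => (‖g x‖₊ : ENNReal) ^ 2) t

lemma lintegral_nnnorm_sq_dilate (g : ℝ → ℂ) {c : ℝ} (hc : 0 < c) :
    ∫⁻ x, (‖((Real.sqrt c : ℂ))⁻¹ * g (x / c)‖₊ : ENNReal) ^ 2
      = ∫⁻ x, (‖g x‖₊ : ENNReal) ^ 2 := by
  have hnorm : (‖((Real.sqrt c : ℂ))⁻¹‖₊ : ENNReal) ^ 2 = ENNReal.ofReal c⁻¹ := by
    rw [← enorm_eq_nnnorm, ← ofReal_norm, ← ENNReal.ofReal_pow (norm_nonneg _), norm_inv,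
      Complex.norm_real, Real.norm_of_nonneg (Real.sqrt_nonneg c), inv_pow,
      Real.sq_sqrt hc.le]
  simp only [nnnorm_mul, ENNReal.coe_mul, mul_pow]
  rw [lintegral_const_mul' _ _ (by simp), hnorm,
    lintegral_comp_div_real (fun x => (‖g x‖₊ : ENNReal) ^ 2) hc.ne', ← mul_assoc,
    ← ENNReal.ofReal_mul (inv_nonneg.2 hc.le), abs_of_pos hc, inv_mul_cancel₀ hc.ne',
    ENNReal.ofReal_one, one_mul]

section

variable {n : ℕ}

lemma transOp_iterate (z : Fin n → ℂ) (f : Fin n → ℝ → ℂ) (m : ℕ) (i : Fin n) (x : ℝ) :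
    (transOp z)^[m] f i x = z i ^ m * f i (x - m) := by
  induction m generalizing f x with
  | zero => simp
  | succ k ih =>
    rw [Function.iterate_succ_apply, ih (transOp z f)]
    simp only [transOp]
    push_cast
    ring_nf

theorem transOp_bijective {z : Fin n → ℂ} (hz : ∀ k, z k ≠ 0) :
    Function.Bijective (transOp z) := by
  refine Function.bijective_iff_has_inverse.2
    ⟨fun f i x => (z i)⁻¹ * f i (x + 1), fun f => ?_, fun f => ?_⟩ <;>
  funext i x <;> simp [transOp, hz i]

theorem dilOp_bijective {N : ℕ} (hN : N ≠ 0) (σ : Equiv.Perm (Fin n)) :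
    Function.Bijective (dilOp N σ) := by
  have hsqrt : (Real.sqrt N : ℂ) ≠ 0 := by simp [hN]
  have hN' : (N : ℝ) ≠ 0 := by exact_mod_cast hN
  refine Function.bijective_iff_has_inverse.2
    ⟨fun f i x => (Real.sqrt N : ℂ) * f (σ⁻¹ i) (x * N), fun f => ?_, fun f => ?_⟩ <;>
  funext i x <;> simp [dilOp, hsqrt, hN']

theorem sum_lintegral_transOp {z : Fin n → ℂ} (hz : ∀ k, ‖z k‖ = 1) (f : Fin n → ℝ → ℂ) :
    ∑ i, ∫⁻ x, (‖transOp z f i x‖₊ : ENNReal) ^ 2 = ∑ i, ∫⁻ x, (‖f i x‖₊ : ENNReal) ^ 2 :=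
  Finset.sum_congr rfl fun i _ => lintegral_nnnorm_sq_mul_comp_sub (f i) (hz i) 1

theorem sum_lintegral_dilOp {N : ℕ} (hN : N ≠ 0) (σ : Equiv.Perm (Fin n))
    (f : Fin n → ℝ → ℂ) :
    ∑ i, ∫⁻ x, (‖dilOp N σ f i x‖₊ : ENNReal) ^ 2 = ∑ i, ∫⁻ x, (‖f i x‖₊ : ENNReal) ^ 2 := by
  simp only [dilOp, lintegral_nnnorm_sq_dilate _ (Nat.cast_pos.2 (Nat.pos_of_ne_zero hN))]
  exact Equiv.sum_comp σ fun i => ∫⁻ x, (‖f i x‖₊ : ENNReal) ^ 2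

theorem dilOp_comp_transOp {N : ℕ} (hN : N ≠ 0) {σ : Equiv.Perm (Fin n)} {z : Fin n → ℂ}
    (hcyc : ∀ k, z k ^ N = z (σ k)) :
    dilOp N σ ∘ transOp z = (transOp z)^[N] ∘ dilOp N σ := by
  have hN' : (N : ℝ) ≠ 0 := by exact_mod_cast hN
  funext f i x
  simp only [Function.comp_apply, transOp_iterate, dilOp, transOp, hcyc i]
  rw [show (x - N) / N = x / N - 1 by field_simp]
  ring

end

/-- With `N ≥ 2`, `σ` a permutation of `{1,…,n}` and `z₁,…,zₙ` on the unit
circle satisfying `zₖ^N = z_{σ(k)}`, the operators `T` and `U` above are unitary on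
`L²(ℝ)ⁿ` — they are bijective and preserve the `L²(ℝ)ⁿ` norm
`‖f‖² = ∑ᵢ ∫ |fᵢ|²` — and they satisfy the commutation relation `U T U⁻¹ = Tᴺ`,
equivalently `U ∘ T = Tᴺ ∘ U`. -/
theorem stmt_15 {n : ℕ} (N : ℕ) (hN : 2 ≤ N) (σ : Equiv.Perm (Fin n))
    (z : Fin n → ℂ) (hz : ∀ k, ‖z k‖ = 1) (hcyc : ∀ k, z k ^ N = z (σ k)) :
    Function.Bijective (transOp z) ∧ Function.Bijective (dilOp N σ) ∧
    (∀ f : Fin n → ℝ → ℂ,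
      ∑ i : Fin n, ∫⁻ x : ℝ, (‖transOp z f i x‖₊ : ENNReal) ^ 2
        = ∑ i : Fin n, ∫⁻ x : ℝ, (‖f i x‖₊ : ENNReal) ^ 2) ∧
    (∀ f : Fin n → ℝ → ℂ,
      ∑ i : Fin n, ∫⁻ x : ℝ, (‖dilOp N σ f i x‖₊ : ENNReal) ^ 2
        = ∑ i : Fin n, ∫⁻ x : ℝ, (‖f i x‖₊ : ENNReal) ^ 2) ∧
    dilOp N σ ∘ transOp z = (transOp z)^[N] ∘ dilOp N σ := by
  have hN0 : N ≠ 0 := by omega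
  have hz0 : ∀ k, z k ≠ 0 := fun k => norm_ne_zero_iff.1 (by simp [hz k])
  exact ⟨transOp_bijective hz0, dilOp_bijective hN0 σ, sum_lintegral_transOp hz,
    sum_lintegral_dilOp hN0 σ, dilOp_comp_transOp hN0 hcyc⟩
end
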